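/- Let μ > 0, κ > 0, k̂ > 1/8 and let σ̃_y > 0 satisfy σ̃_y² ≤ (6/e)·(κ/μ)·(8k̂ − 1)/(8k̂). Then there exists k > 0 such that for every X ∈ Sym(3) with ‖dev₃ X‖² ≤ (2/3)·σ̃_y² and every H ∈ Sym(3) with H ≠ 0, one has Q(X, H) > 0, where Q(X, H) = 2μ·exp(k‖dev₃ X‖² − tr X)·(2k·⟨dev₃ X, H⟩² − tr(H)·⟨dev₃ X, H⟩ + ‖dev₃ H‖²) + κ·exp(k̂(tr X)² − tr X)·(2k̂(tr X)² − tr X + 1)·(tr H)². -/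
import Mathlib


open Matrix Real

/-- The deviatoric (trace-free) part of a 3×3 matrix: `dev₃ X = X − (tr X/3)·1`. -/
noncomputable def dev3 (X : Matrix (Fin 3) (Fin 3) ℝ) : Matrix (Fin 3) (Fin 3) ℝ :=
  X - (X.trace / 3) • (1 : Matrix (Fin 3) (Fin 3) ℝ)

/-- The Frobenius inner product `⟨A, B⟩ = tr(A Bᵀ)`. -/
noncomputable def minner (A B : Matrix (Fin 3) (Fin 3) ℝ) : ℝ := (A * Bᵀ).trace

/-- The second-order form `Q(X,H) = ⟨D_X σ_eH(X).H, H⟩` of the exponentiated Hencky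
Cauchy stress. -/
noncomputable def Qform (μ κ k khat : ℝ) (X H : Matrix (Fin 3) (Fin 3) ℝ) : ℝ :=
  2 * μ * Real.exp (k * minner (dev3 X) (dev3 X) - X.trace) *
      (2 * k * minner (dev3 X) H ^ 2 - H.trace * minner (dev3 X) H
        + minner (dev3 H) (dev3 H))
    + κ * Real.exp (khat * X.trace ^ 2 - X.trace) *
        (2 * khat * X.trace ^ 2 - X.trace + 1) * H.trace ^ 2

section Aux

lemma minner_eq_sum (A B : Matrix (Fin 3) (Fin 3) ℝ) :
    minner A B = ∑ p : Fin 3 × Fin 3, A p.1 p.2 * B p.1 p.2 := by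
  rw [Fintype.sum_prod_type]
  simp [minner, Matrix.trace, Matrix.mul_apply, Matrix.diag, Matrix.transpose_apply]

lemma minner_self_nonneg (A : Matrix (Fin 3) (Fin 3) ℝ) : 0 ≤ minner A A := by
  rw [minner_eq_sum]
  exact Finset.sum_nonneg fun p _ => mul_self_nonneg _

lemma minner_self_eq_zero {A : Matrix (Fin 3) (Fin 3) ℝ} (h : minner A A = 0) : A = 0 := by
  rw [minner_eq_sum] at h
  have := (Finset.sum_eq_zero_iff_of_nonneg (fun p _ => mul_self_nonneg (A p.1 p.2))).1 h
  ext i j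
  have := this (i, j) (Finset.mem_univ _)
  simpa [mul_self_eq_zero] using this

lemma trace_dev3 (X : Matrix (Fin 3) (Fin 3) ℝ) : (dev3 X).trace = 0 := by
  simp [dev3, Matrix.trace_sub, Matrix.trace_smul, Matrix.trace_one]

lemma minner_dev3_right (X H : Matrix (Fin 3) (Fin 3) ℝ) :
    minner (dev3 X) H = minner (dev3 X) (dev3 H) := by
  have h1 : minner (dev3 X) (1 : Matrix (Fin 3) (Fin 3) ℝ) = 0 := by
    simp [minner, trace_dev3]
  simp only [dev3, minner] at *
  simp [Matrix.transpose_sub, Matrix.transpose_smul, Matrix.mul_sub,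
    Matrix.mul_smul, Matrix.trace_sub, Matrix.trace_smul, h1]

lemma minner_cs (A B : Matrix (Fin 3) (Fin 3) ℝ) :
    (minner A B)^2 ≤ minner A A * minner B B := by
  rw [minner_eq_sum, minner_eq_sum, minner_eq_sum]
  have := Finset.sum_mul_sq_le_sq_mul_sq Finset.univ
    (fun p : Fin 3 × Fin 3 => A p.1 p.2) (fun p : Fin 3 × Fin 3 => B p.1 p.2)
  simpa [pow_two] using this

lemma eq_zero_of_dev3 (H : Matrix (Fin 3) (Fin 3) ℝ) (h1 : dev3 H = 0) (h2 : H.trace = 0) :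
    H = 0 := by
  have : H = dev3 H + (H.trace/3) • 1 := by simp [dev3]
  rw [this, h1, h2]; simp

lemma auxQt (khat c t : ℝ) (h8 : 0 < 8*khat) (h8c : 8*khat*c = 8*khat-1) :
    c ≤ 2*khat*t^2 - t + 1 := by
  nlinarith [sq_nonneg (4*khat*t-1)]

/-- The main algebraic inequality (exp factors abstracted). -/
lemma auxMain (μ κ c k r a h e E s x : ℝ) (hμ : 0 < μ) (hκ : 0 < κ) (hc0 : 0 < c)
    (hk0 : 0 < k) (hr0 : 0 ≤ r) (he : 0 ≤ e) (hcs : a^2 ≤ r*e) (hne : 0 < e ∨ h ≠ 0)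
    (hE0 : 0 < E) (hE2 : E ≤ s) (hs0 : 0 < s) (hs2 : 1 < s) (hs1 : s*s = x)
    (hμ8 : μ*x ≤ 8*κ*c*k) (hkr : k*r ≤ 1/2) :
    0 < 2*μ*E*(2*k*a^2 - h*a + e) + κ*c*h^2 := by
  rcases he.lt_or_eq with hepos | he0
  · by_cases h0 : h = 0
    · subst h0
      linarith [mul_pos (mul_pos hμ hE0) hepos,
        mul_nonneg (mul_nonneg (mul_nonneg hμ.le hE0.le) hk0.le) (sq_nonneg a)]
    · have hh2 : 0 < h^2 := sq_pos_of_ne_zero h0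
      rcases hr0.lt_or_eq with hr | hr
      · -- r > 0 : discriminant argument
        have q : 0 ≤ μ*r*s*(s-E) :=
          mul_nonneg (mul_nonneg (mul_nonneg hμ.le hr.le) hs0.le) (by linarith)
        have q' : μ*r*(s*s) = μ*r*x := by rw [hs1]
        have p1 : μ*E*r*s ≤ μ*x*r := by linarith [q, q']
        have p2 : μ*x*r ≤ 8*κ*c*k*r := mul_le_mul_of_nonneg_right hμ8 hr.le
        have hα : 0 < 2*k*r+1 := by nlinarith [mul_nonneg hk0.le hr0]
        have q1 : 0 < (s-1)*((κ*c)*(2*k*r+1)) :=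
          mul_pos (by linarith) (mul_pos (mul_pos hκ hc0) hα)
        have q2 : 0 ≤ (κ*c)*(1-2*(k*r)) :=
          mul_nonneg (mul_pos hκ hc0).le (by linarith)
        have p3 : 8*κ*c*(k*r) < s*(2*κ*c*(2*k*r+1)) := by linarith [q1, q2]
        have hd : μ*E*r < 2*κ*c*(2*k*r+1) := by
          by_contra hcon
          push_neg at hcon
          have := mul_le_mul_of_nonneg_right hcon hs0.le
          linarith [p1, p2, p3, this]
        have hsq : 0 ≤ μ*E*(2*(2*k*r+1)*a - r*h)^2 :=
          mul_nonneg (mul_nonneg hμ.le hE0.le) (sq_nonneg _)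
        have h3 : 0 < r*h^2*(2*κ*c*(2*k*r+1) - μ*E*r) :=
          mul_pos (mul_pos hr hh2) (by linarith)
        have hprod : 0 ≤ 4*(2*k*r+1)*(μ*E)*(r*e - a^2) :=
          mul_nonneg (mul_nonneg (by linarith) (mul_pos hμ hE0).le) (by linarith)
        have hG : 0 < (2*(2*k*r+1)*r) * (2*μ*E*(2*k*a^2 - h*a + e) + κ*c*h^2) := by
          nlinarith [hsq, h3, hprod]
        by_contra hcon
        push_neg at hcon
        have hαr : 0 ≤ 2*(2*k*r+1)*r := by positivity
        have := mul_nonpos_of_nonneg_of_nonpos hαr hcon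
        linarith [hG, this]
      · -- r = 0 so a = 0
        subst hr
        have ha2 : a^2 = 0 := le_antisymm (by simpa using hcs) (sq_nonneg a)
        have ha : a = 0 := sq_eq_zero_iff.1 ha2
        subst ha
        linarith [mul_pos (mul_pos hμ hE0) hepos, mul_pos (mul_pos hκ hc0) hh2]
  · -- e = 0, so a = 0 and h ≠ 0
    have he0' : e = 0 := he0.symm
    subst he0'
    have ha2 : a^2 = 0 := le_antisymm (by nlinarith [hcs]) (sq_nonneg a)
    have ha : a = 0 := sq_eq_zero_iff.1 ha2
    have hh : h ≠ 0 := by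
      rcases hne with h1 | h1
      · exact absurd h1 (lt_irrefl 0)
      · exact h1
    have hh2 : 0 < h^2 := sq_pos_of_ne_zero hh
    subst ha
    linarith [mul_pos (mul_pos hκ hc0) hh2]

/-- Final assembly, abstracting the exponentials. -/
lemma auxCombine (μ κ c k a h e F Et G : ℝ) (hκ : 0 < κ)
    (hEt : 0 < Et) (hmain : 0 < 2*μ*G*(2*k*a^2 - h*a + e) + κ*c*h^2)
    (hF : Et * c ≤ F) :
    0 < 2*μ*(Et*G)*(2*k*a^2 - h*a + e) + κ*F*h^2 := by
  have h4 : 0 < Et * (2*μ*G*(2*k*a^2 - h*a + e) + κ*c*h^2) := mul_pos hEt hmain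
  have hmono : κ*(Et*c)*h^2 ≤ κ*F*h^2 :=
    mul_le_mul_of_nonneg_right (mul_le_mul_of_nonneg_left hF hκ.le) (sq_nonneg h)
  nlinarith [h4, hmono]

set_option maxHeartbeats 1000000 in
lemma coreQ (μ κ khat σy k r a h e t : ℝ) (hμ : 0 < μ) (hκ : 0 < κ) (hkh : 1/8 < khat)
    (hσy : 0 < σy)
    (hbound : σy^2 ≤ 6/Real.exp 1 * (κ/μ) * ((8*khat-1)/(8*khat)))
    (hk : k = 3/(4*σy^2)) (hr0 : 0 ≤ r) (hrR : r ≤ 2/3*σy^2) (he : 0 ≤ e)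
    (hcs : a^2 ≤ r*e) (hne : 0 < e ∨ h ≠ 0) :
    0 < 2*μ*Real.exp (k*r - t)*(2*k*a^2 - h*a + e)
      + κ*Real.exp (khat*t^2 - t)*(2*khat*t^2 - t + 1)*h^2 := by
  have hkh0 : 0 < khat := lt_trans (by norm_num) hkh
  set c := (8*khat-1)/(8*khat) with hc
  have h8 : 0 < 8*khat := by linarith
  have hc0 : 0 < c := div_pos (by linarith) h8
  have h8c : 8*khat*c = 8*khat - 1 := by rw [hc]; field_simp
  have hσ2 : 0 < σy^2 := by positivity
  have hk0 : 0 < k := by rw [hk]; positivity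
  have hb2 : σy^2*(Real.exp 1*μ) ≤ 6*κ*c := by
    have e1 : (0:ℝ) < Real.exp 1*μ := by positivity
    have e2 : (6/Real.exp 1*(κ/μ)*c)*(Real.exp 1*μ) = 6*κ*c := by field_simp
    have := mul_le_mul_of_nonneg_right hbound e1.le
    linarith [this, e2.ge, e2.le]
  have hkσ : k*σy^2 = 3/4 := by rw [hk]; field_simp
  have h6 : 8*κ*c*k*σy^2 = 6*κ*c := by linear_combination (8*κ*c) * hkσ
  have hμ8 : μ*Real.exp 1 ≤ 8*κ*c*k :=
    le_of_mul_le_mul_right (by linarith [hb2, h6]) hσ2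
  -- lower bound for the trace part
  have hQt : c ≤ 2*khat*t^2 - t + 1 := auxQt khat c t h8 h8c
  have hexpkh : 1 ≤ Real.exp (khat*t^2) :=
    Real.one_le_exp (mul_nonneg hkh0.le (sq_nonneg t))
  have hFt : Real.exp (-t) * c ≤ Real.exp (khat*t^2 - t) * (2*khat*t^2 - t + 1) := by
    rw [show khat*t^2 - t = khat*t^2 + (-t) by ring, Real.exp_add]
    have h1 : Real.exp (-t) * c ≤ Real.exp (-t) * (2*khat*t^2 - t + 1) :=
      mul_le_mul_of_nonneg_left hQt (Real.exp_pos _).le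
    have h2 : 0 ≤ Real.exp (-t) * (2*khat*t^2 - t + 1) :=
      le_trans (by positivity) h1
    calc Real.exp (-t) * c ≤ Real.exp (-t) * (2*khat*t^2 - t + 1) := h1
      _ = 1 * (Real.exp (-t) * (2*khat*t^2 - t + 1)) := by ring
      _ ≤ Real.exp (khat*t^2) * (Real.exp (-t) * (2*khat*t^2 - t + 1)) :=
          mul_le_mul_of_nonneg_right hexpkh h2
      _ = Real.exp (khat*t^2) * Real.exp (-t) * (2*khat*t^2 - t + 1) := by ring
  have hkr : k*r ≤ 1/2 := by
    have h1 : k*r ≤ k*(2/3*σy^2) := mul_le_mul_of_nonneg_left hrR hk0.le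
    linarith [h1, hkσ]
  have hs1 : Real.exp (1/2:ℝ)*Real.exp (1/2:ℝ) = Real.exp 1 := by
    rw [← Real.exp_add]; norm_num
  have hs2 : 1 < Real.exp (1/2:ℝ) := by
    have h := Real.add_one_le_exp (1/2 : ℝ); linarith
  have hE2 : Real.exp (k*r) ≤ Real.exp (1/2:ℝ) := Real.exp_le_exp.2 (by linarith)
  have main : 0 < 2*μ*Real.exp (k*r)*(2*k*a^2 - h*a + e) + κ*c*h^2 :=
    auxMain μ κ c k r a h e (Real.exp (k*r)) (Real.exp (1/2:ℝ)) (Real.exp 1)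
      hμ hκ hc0 hk0 hr0 he hcs hne (Real.exp_pos _) hE2 (Real.exp_pos _) hs2 hs1 hμ8 hkr
  have := auxCombine μ κ c k a h e
    (Real.exp (khat*t^2 - t) * (2*khat*t^2 - t + 1)) (Real.exp (-t)) (Real.exp (k*r))
    hκ (Real.exp_pos _) main hFt
  rw [show k*r - t = -t + k*r by ring, Real.exp_add]
  linarith [this]

end Aux

/-- TSTS-M⁺ for the exponentiated Hencky energy on a domain of bounded distortions:
if `μ, κ > 0`, `k̂ > 1/8` and `σ̃_y > 0` satisfies
`σ̃_y² ≤ (6/e)·(κ/μ)·(8k̂−1)/(8k̂)`, then there is `k > 0` such that `Q(X, H) > 0`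
for all symmetric `X` with `‖dev₃ X‖² ≤ (2/3)σ̃_y²` and all symmetric `H ≠ 0`. -/
theorem Qform_pos_of_bounded_distortion (μ κ khat σy : ℝ) (hμ : 0 < μ) (hκ : 0 < κ)
    (hkhat : 1 / 8 < khat) (hσy : 0 < σy)
    (hbound : σy ^ 2 ≤ 6 / Real.exp 1 * (κ / μ) * ((8 * khat - 1) / (8 * khat))) :
    ∃ k : ℝ, 0 < k ∧
      ∀ X : Matrix (Fin 3) (Fin 3) ℝ, X.IsSymm →
        minner (dev3 X) (dev3 X) ≤ 2 / 3 * σy ^ 2 →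
        ∀ H : Matrix (Fin 3) (Fin 3) ℝ, H.IsSymm → H ≠ 0 →
          0 < Qform μ κ k khat X H := by
  refine ⟨3/(4*σy^2), by positivity, ?_⟩
  intro X _ hXb H _ hH0
  have hcs : (minner (dev3 X) H)^2 ≤ minner (dev3 X) (dev3 X) * minner (dev3 H) (dev3 H) := by
    rw [minner_dev3_right]
    exact minner_cs (dev3 X) (dev3 H)
  have hne : 0 < minner (dev3 H) (dev3 H) ∨ H.trace ≠ 0 := by
    by_contra hcon
    push_neg at hcon
    obtain ⟨h1, h2⟩ := hcon
    have he0 : minner (dev3 H) (dev3 H) = 0 := le_antisymm h1 (minner_self_nonneg _)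
    exact hH0 (eq_zero_of_dev3 H (minner_self_eq_zero he0) h2)
  have := coreQ μ κ khat σy (3/(4*σy^2)) (minner (dev3 X) (dev3 X))
    (minner (dev3 X) H) H.trace (minner (dev3 H) (dev3 H)) X.trace
    hμ hκ hkhat hσy hbound rfl (minner_self_nonneg _) hXb (minner_self_nonneg _) hcs hne
  unfold Qform
  linarith [this]
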